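/- arXiv:0909.3281 — 2 statements merged into one kernel-verified Lean document; each statement's English description precedes it below -/
import Mathlib

section
/- Let α/β = [a_1, ..., a_n] be a 1-regular continued fraction with integer entries and a_1, a_2 > 0. Then α/β > 1. -/
/-- Evaluation of a finite continued fraction `[a₁, a₂, …, aₙ] = a₁ + 1/(a₂ + 1/(⋯ + 1/aₙ))`. -/
def cf : List ℤ → ℚ
  | [] => 0
  | a :: l => a + (cf l)⁻¹

/-- A continued fraction `[a₁, …, aₙ]` is 1-regular: all entries are nonzero,
`a_{n-1} aₙ > 0`, and there are no two consecutive sign changes. -/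
def OneRegular (l : List ℤ) : Prop :=
  (∀ a ∈ l, a ≠ 0) ∧
  (2 ≤ l.length → 0 < l[l.length - 2]! * l[l.length - 1]!) ∧
  (∀ i, i + 2 < l.length → l[i]! * l[i + 1]! < 0 → 0 < l[i + 1]! * l[i + 2]!)

/-! A 1-regular continued fraction `[a, b, …]` has the sign of `a`, and absolute value greater
than `1` when `a` and `b` have the same sign. Both claims are proved together by induction on
the length, writing `[a, b, …] = a + 1/x` with `x = [b, …]`. If `ab > 0`, then `x` has the sign of
`b`, hence of `a`, and `|a + 1/x| > |a| ≥ 1`. If `ab < 0`, regularity forbids a sign change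
between `b` and the next entry, so `|x| > 1` and `|1/x| < 1 ≤ |a|`: the sign of `a` still wins. -/

section SignArithmetic

variable {K : Type*} [Field K] [LinearOrder K] [IsStrictOrderedRing K]

lemma pos_mul_of_pos_mul_of_pos_mul {a b c : K} (hab : 0 < a * b) (hbc : 0 < b * c) :
    0 < a * c := by
  have h : 0 < b ^ 2 * (a * c) := by convert mul_pos hab hbc using 1; ring
  exact pos_of_mul_pos_right h (sq_nonneg b)

lemma pos_mul_inv_iff {a x : K} : 0 < a * x⁻¹ ↔ 0 < a * x := by
  rw [← div_eq_mul_inv, div_pos_iff, mul_pos_iff]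

lemma pos_mul_add_of_abs_lt {a y : K} (h : |y| < |a|) : 0 < a * (a + y) := by
  have : -(a * y) ≤ |a| * |y| := by rw [← abs_mul]; exact neg_le_abs _
  nlinarith [abs_nonneg y, sq_abs a]

lemma abs_lt_abs_add_of_pos_mul {a y : K} (h : 0 < a * y) : |a| < |a + y| := by
  rcases mul_pos_iff.mp h with ⟨ha, hy⟩ | ⟨ha, hy⟩
  · rw [abs_of_pos ha, abs_of_pos (by linarith)]; linarith
  · rw [abs_of_neg ha, abs_of_neg (by linarith)]; linarith

end SignArithmetic

namespace OneRegular

lemma tail {a : ℤ} {t : List ℤ} (h : OneRegular (a :: t)) : OneRegular t := by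
  obtain ⟨hne, hlast, hchange⟩ := h
  refine ⟨fun x hx => hne x (List.mem_cons_of_mem _ hx), fun hlen => ?_, fun i hi => ?_⟩
  · have h := hlast (by simp; omega)
    simp only [List.length_cons] at h
    rwa [show t.length + 1 - 2 = t.length - 2 + 1 by omega,
      show t.length + 1 - 1 = t.length - 1 + 1 by omega,
      List.getElem!_cons_succ, List.getElem!_cons_succ] at h
  · simpa using hchange (i + 1) (by simp; omega)

lemma pos_mul_of_mul_neg {a b : ℤ} {s : List ℤ} (h : OneRegular (a :: b :: s)) (hab : a * b < 0) :
    0 < b * s[0]! := by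
  cases s with
  | nil => exact absurd (h.2.1 (by simp)) (by simpa using hab.le)
  | cons c s => simpa using h.2.2 0 (by simp) (by simpa using hab)

-- For `t = []` the junk value `t[0]! = 0` makes the second claim vacuous.
lemma pos_mul_cf_and_one_lt_abs_cf {a : ℤ} {t : List ℤ} (h : OneRegular (a :: t)) :
    0 < (a : ℚ) * cf (a :: t) ∧ (0 < a * t[0]! → 1 < |cf (a :: t)|) := by
  induction t generalizing a with
  | nil =>
    have ha : (a : ℚ) ≠ 0 := by exact_mod_cast h.1 a (by simp)
    simpa [cf] using mul_self_pos.mpr ha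
  | cons b s ih =>
    obtain ⟨hbx, hx⟩ := ih h.tail
    set x := cf (b :: s)
    have hcf : cf (a :: b :: s) = a + x⁻¹ := rfl
    have ha : (1 : ℚ) ≤ |(a : ℚ)| := by exact_mod_cast Int.one_le_abs (h.1 a (by simp))
    simp only [List.getElem!_cons_zero, hcf]
    rcases lt_or_gt_of_ne (mul_ne_zero (h.1 a (by simp)) (h.1 b (by simp))) with hab | hab
    · have hx1 : |x⁻¹| < |(a : ℚ)| := by
        rw [abs_inv]
        exact (inv_lt_one_of_one_lt₀ (hx (h.pos_mul_of_mul_neg hab))).trans_le ha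
      exact ⟨pos_mul_add_of_abs_lt hx1, fun hab' => absurd hab' hab.not_gt⟩
    · have hax : 0 < (a : ℚ) * x⁻¹ :=
        pos_mul_inv_iff.mpr (pos_mul_of_pos_mul_of_pos_mul (by exact_mod_cast hab) hbx)
      exact ⟨by rw [mul_add]; exact add_pos_of_nonneg_of_pos (mul_self_nonneg _) hax,
        fun _ => ha.trans_lt (abs_lt_abs_add_of_pos_mul hax)⟩

end OneRegular

theorem one_regular_gt_one_general (l : List ℤ)
    (hreg : OneRegular l) (h1 : 0 < l[0]!) (h2 : 0 < l[1]!)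
    (α β : ℤ) (hval : cf l = (α : ℚ) / β) :
    1 < (α : ℚ) / β := by
  rw [← hval]
  cases l with
  | nil => simp at h1
  | cons a t =>
    simp only [List.getElem!_cons_zero, List.getElem!_cons_succ] at h1 h2
    obtain ⟨hsign, habs⟩ := hreg.pos_mul_cf_and_one_lt_abs_cf
    have hpos : 0 < cf (a :: t) := pos_of_mul_pos_right hsign (by positivity)
    rw [abs_of_pos hpos] at habs
    exact habs (mul_pos h1 h2)

theorem one_regular_gt_one (l : List ℤ) (hn : 2 ≤ l.length)
    (hreg : OneRegular l) (h1 : 0 < l[0]!) (h2 : 0 < l[1]!)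
    (α β : ℤ) (hβ : β ≠ 0) (hval : cf l = (α : ℚ) / β) :
    1 < (α : ℚ) / β :=
  one_regular_gt_one_general l hreg h1 h2 α β hval
end

section
/- For every k ≥ 1, the Möbius transformation (PM)^{k+1}(MP)^k sends ∞ to 2k + 2 + 1/(2k), where P: x ↦ 1 + 1/x and M: x ↦ 1/(1+x). -/
/-- The matrix of the Möbius transformation `P : x ↦ 1 + 1/x`. -/
def Pm : Matrix (Fin 2) (Fin 2) ℤ := !![1, 1; 1, 0]

/-- The matrix of the Möbius transformation `M : x ↦ 1/(1+x)`. -/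
def Mm : Matrix (Fin 2) (Fin 2) ℤ := !![0, 1; 1, 1]

/-- The image `G(∞)` of the point at infinity under the fractional linear
transformation with matrix `A`, namely `A₀₀ / A₁₀`. -/
def mobInf (A : Matrix (Fin 2) (Fin 2) ℤ) : ℚ := (A 0 0 : ℚ) / (A 1 0)

/-!
`PM` and `MP` are the parabolic matrices `!![1, 2; 0, 1]` and `!![1, 0; 2, 1]`, so their powers
are `!![1, 2n; 0, 1]` and `!![1, 0; 2n, 1]`. The product `(PM)^(k+1) (MP)^k` is therefore
`!![1 + 4k(k+1), 2(k+1); 2k, 1]`, which sends `∞` to `(1 + 4k(k+1)) / (2k)`.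
-/

section Unitriangular

variable {R : Type*} [CommSemiring R]

theorem Matrix.upperUnitriangular_pow (a : R) (n : ℕ) :
    !![1, a; 0, 1] ^ n = !![1, n * a; 0, 1] := by
  induction n with
  | zero => simp [Matrix.one_fin_two]
  | succ n ih =>
    rw [pow_succ, ih, Matrix.mul_fin_two]
    push_cast
    ring_nf

theorem Matrix.lowerUnitriangular_pow (a : R) (n : ℕ) :
    !![1, 0; a, 1] ^ n = !![1, 0; n * a, 1] := by
  induction n with
  | zero => simp [Matrix.one_fin_two]
  | succ n ih =>
    rw [pow_succ, ih, Matrix.mul_fin_two]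
    push_cast
    ring_nf

end Unitriangular

theorem Pm_mul_Mm : Pm * Mm = !![1, 2; 0, 1] := by
  simp [Pm, Mm]

theorem Mm_mul_Pm : Mm * Pm = !![1, 0; 2, 1] := by
  simp [Pm, Mm]

theorem mobInf_upperUnitriangular_mul_lowerUnitriangular (b c : ℤ) :
    mobInf (!![1, b; 0, 1] * !![1, 0; c, 1]) = (1 + b * c) / c := by
  simp [mobInf]

/-- For every `k ≥ 1`, `(PM)^(k+1) (MP)^k (∞) = 2k + 2 + 1/(2k)`. -/
theorem stevedore_fraction (k : ℕ) (hk : 1 ≤ k) :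
    mobInf ((Pm * Mm) ^ (k + 1) * (Mm * Pm) ^ k) =
      2 * (k : ℚ) + 2 + 1 / (2 * (k : ℚ)) := by
  rw [Pm_mul_Mm, Mm_mul_Pm, Matrix.upperUnitriangular_pow, Matrix.lowerUnitriangular_pow,
    mobInf_upperUnitriangular_mul_lowerUnitriangular]
  have hk₀ : (k : ℚ) ≠ 0 := by positivity
  push_cast
  field_simp
  ring
end
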